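/- Let n, k satisfy 4 ≤ 2k ≤ n and let G be a collection of subsets of [n], each of size at most k. Then F(n,k,G) = {S ∈ C([n],k) : S ⪯ G for some G ∈ G} is an intersecting family if and only if for every G, H ∈ G (not necessarily distinct) there exists l ∈ [n] with μ_G(l) + μ_H(l) > l. -/

import Mathlib

/-! If `μ_G(l) + μ_H(l) > l` for some `l`, then any `S ⪯ G` and `T ⪯ H` satisfy
`μ_S(l) + μ_T(l) ≥ μ_G(l) + μ_H(l) > l`, so `S` and `T` meet inside `[l]`.
Conversely, if `μ_G(l) + μ_H(l) ≤ l` for all `l`, list `G` and `H` together in increasing order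
(an element of `G` before an equal element of `H`) and replace each element by its position in
this list. The positions are disjoint sets `P ⪯ G` and `Q ⪯ H`, since the hypothesis says that
no element moves up; padding them disjointly inside `[n]`, which has room as `2k ≤ n`,
gives two disjoint members of `F(n,k,𝒢)`. -/

open Finset

/-- 1-indexed i-th smallest element of a finset of naturals (0 if out of range). -/
def nth (A : Finset ℕ) (i : ℕ) : ℕ := (A.sort (· ≤ ·)).getD (i - 1) 0

/-- Elementwise order on finsets of equal size: `A ≤ B`. -/
def eLE (A B : Finset ℕ) : Prop :=
  A.card = B.card ∧ ∀ i, 1 ≤ i → i ≤ B.card → nth A i ≤ nth B i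

/-- `A ⪯ B`: `|A| ≥ |B|` and the i-th smallest of `A` is ≤ the i-th smallest of `B` for `i ≤ |B|`. -/
def preceq (A B : Finset ℕ) : Prop :=
  B.card ≤ A.card ∧ ∀ i, 1 ≤ i → i ≤ B.card → nth A i ≤ nth B i

/-- `μ_X(l) = |X ∩ [l]|`. -/
def mu (X : Finset ℕ) (l : ℕ) : ℕ := (X ∩ Finset.Icc 1 l).card

/-- `G ∼_si H` (within `[n]`): every `G' ≤ G` and `H' ≤ H` with `G', H' ⊆ [n]` intersect. -/
def sInt (n : ℕ) (G H : Finset ℕ) : Prop :=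
  ∀ G' H' : Finset ℕ, G' ⊆ Finset.Icc 1 n → H' ⊆ Finset.Icc 1 n →
    eLE G' G → eLE H' H → (G' ∩ H').Nonempty

/-- `F(n,k,𝒢)`: the k-subsets `S` of `[n]` with `S ⪯ G` for some `G ∈ 𝒢`. -/
def Fam (n k : ℕ) (𝒢 : Set (Finset ℕ)) : Set (Finset ℕ) :=
  {S | S ⊆ Finset.Icc 1 n ∧ S.card = k ∧ ∃ G ∈ 𝒢, preceq S G}

/-- A family is intersecting if every two members (possibly equal) intersect. -/
def IsIntersecting (𝒜 : Set (Finset ℕ)) : Prop :=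
  ∀ A ∈ 𝒜, ∀ B ∈ 𝒜, (A ∩ B).Nonempty

/-- The type of `G`: the largest `r` with `g_r < k + r`. -/
def typeOf (k : ℕ) (G : Finset ℕ) : ℕ :=
  ((Finset.range (G.card + 1)).filter fun r => 1 ≤ r ∧ nth G r < k + r).sup id

/-- `π(G) = {g_1, …, g_r}` where `r` is the type of `G`. -/
def piG (k : ℕ) (G : Finset ℕ) : Finset ℕ :=
  ((G.sort (· ≤ ·)).take (typeOf k G)).toFinset

section NthMu

variable {A B : Finset ℕ} {i l n r x : ℕ}

lemma pos_of_subset_Icc (hA : A ⊆ Icc 1 n) : ∀ x ∈ A, 0 < x :=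
  fun _ hx => (mem_Icc.1 (hA hx)).1

lemma nth_eq_getElem (hi : i ∈ Set.Icc 1 #A) :
    nth A i = (A.sort (· ≤ ·))[i - 1]'(by rw [length_sort]; grind) := by
  rw [nth, List.getD_eq_getElem]

lemma nth_mem (hi : i ∈ Set.Icc 1 #A) : nth A i ∈ A := by
  rw [nth_eq_getElem hi, ← mem_sort (· ≤ ·)]
  exact List.getElem_mem _

lemma nth_strictMonoOn : StrictMonoOn (nth A) (Set.Icc 1 #A) := by
  intro i hi j hj hij
  rw [nth_eq_getElem hi, nth_eq_getElem hj]
  exact (sortedLT_sort A).pairwise.rel_get_of_lt (by simp only [Fin.mk_lt_mk]; grind)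

lemma exists_nth_eq (hx : x ∈ A) : ∃ i ∈ Set.Icc 1 #A, nth A i = x := by
  obtain ⟨m, hm, rfl⟩ := List.mem_iff_getElem.1 ((mem_sort (· ≤ ·)).2 hx)
  rw [length_sort] at hm
  exact ⟨m + 1, ⟨by omega, by omega⟩, nth_eq_getElem ⟨by omega, by omega⟩⟩

lemma mu_le_card : mu A l ≤ #A :=
  card_le_card inter_subset_left

lemma mu_mono : Monotone (mu A) := fun _ _ h =>
  card_le_card (inter_subset_inter le_rfl (Icc_subset_Icc le_rfl h))

lemma mu_lt_mu_of_mem (hx : x ∈ A) (hx0 : 0 < x) (hlx : l < x) : mu A l < mu A x := by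
  refine card_lt_card (ssubset_iff_of_subset ?_ |>.2 ⟨x, ?_, ?_⟩)
  · exact inter_subset_inter le_rfl (Icc_subset_Icc le_rfl hlx.le)
  · exact mem_inter.2 ⟨hx, mem_Icc.2 ⟨hx0, le_rfl⟩⟩
  · simp [hlx.not_ge]

lemma mu_pos_of_mem (hx : x ∈ A) (hx0 : 0 < x) : 0 < mu A x :=
  Nat.zero_lt_of_lt (mu_lt_mu_of_mem hx hx0 hx0)

lemma nth_le_iff_le_mu (hA : ∀ x ∈ A, 0 < x) (hr : r ∈ Set.Icc 1 #A) :
    nth A r ≤ l ↔ r ≤ mu A l := by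
  constructor
  · intro hrl
    have hIcc : Set.Icc 1 r ⊆ Set.Icc 1 #A := Set.Icc_subset_Icc le_rfl hr.2
    have hmaps : Set.MapsTo (nth A) (Icc 1 r) ↑(A ∩ Icc 1 l) := fun i hi => by
      rw [coe_Icc] at hi
      have hiA := nth_mem (hIcc hi)
      exact mem_inter.2 ⟨hiA, mem_Icc.2
        ⟨hA _ hiA, (nth_strictMonoOn.monotoneOn (hIcc hi) hr hi.2).trans hrl⟩⟩
    simpa [mu] using card_le_card_of_injOn (nth A) hmaps
      (nth_strictMonoOn.injOn.mono (by rwa [coe_Icc]))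
  · contrapose!
    intro hlr
    have hsurj : Set.SurjOn (nth A) (Icc 1 (r - 1)) ↑(A ∩ Icc 1 l) := fun x hx => by
      obtain ⟨hxA, hxl⟩ := mem_inter.1 (mem_coe.1 hx)
      obtain ⟨i, hi, rfl⟩ := exists_nth_eq hxA
      refine ⟨i, mem_coe.2 (mem_Icc.2 ⟨hi.1, ?_⟩), rfl⟩
      by_contra! hir
      have := nth_strictMonoOn.monotoneOn hr hi (by omega)
      have := (mem_Icc.1 hxl).2
      omega
    have := card_le_card_of_surjOn (nth A) hsurj
    rw [Nat.card_Icc] at this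
    have := hr.1
    unfold mu
    omega

lemma inter_nonempty_of_lt_mu_add_mu (h : l < mu A l + mu B l) :
    (A ∩ B).Nonempty :=
  (inter_nonempty_of_card_lt_card_add_card (s := Icc 1 l) inter_subset_right inter_subset_right
    (by simpa [mu] using h)).mono (inter_subset_inter inter_subset_left inter_subset_left)

end NthMu

section Preceq

variable {S P G : Finset ℕ}

lemma preceq_iff_mu_le (hS : ∀ x ∈ S, 0 < x) (hG : ∀ x ∈ G, 0 < x) :
    preceq S G ↔ #G ≤ #S ∧ ∀ l, mu G l ≤ mu S l := by
  refine ⟨fun ⟨hc, h⟩ => ⟨hc, fun l => ?_⟩, fun ⟨hc, h⟩ => ⟨hc, fun i h1 h2 => ?_⟩⟩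
  · rcases Nat.eq_zero_or_pos (mu G l) with h0 | hpos
    · exact h0.trans_le (Nat.zero_le _)
    have hr : mu G l ∈ Set.Icc 1 #G := ⟨hpos, mu_le_card⟩
    exact (nth_le_iff_le_mu hS ⟨hpos, hr.2.trans hc⟩).1
      ((h _ hr.1 hr.2).trans ((nth_le_iff_le_mu hG hr).2 le_rfl))
  · exact (nth_le_iff_le_mu hS ⟨h1, h2.trans hc⟩).2
      (((nth_le_iff_le_mu hG ⟨h1, h2⟩).1 le_rfl).trans (h _))

lemma preceq_of_subset (hS : ∀ x ∈ S, 0 < x) (hG : ∀ x ∈ G, 0 < x) (hPS : P ⊆ S)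
    (h : preceq P G) : preceq S G := by
  have hP : ∀ x ∈ P, 0 < x := fun x hx => hS x (hPS hx)
  obtain ⟨hc, hmu⟩ := (preceq_iff_mu_le hP hG).1 h
  exact (preceq_iff_mu_le hS hG).2 ⟨hc.trans (card_le_card hPS),
    fun l => (hmu l).trans (card_le_card (inter_subset_inter hPS le_rfl))⟩

lemma preceq_image_of_injOn {f : ℕ → ℕ} (hG : ∀ x ∈ G, 0 < x) (hinj : Set.InjOn f G)
    (hf : ∀ x ∈ G, f x ∈ Icc 1 x) : preceq (G.image f) G := by
  have hfG : ∀ y ∈ G.image f, 0 < y := by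
    simp only [mem_image, forall_exists_index, and_imp, forall_apply_eq_imp_iff₂]
    exact fun x hx => (mem_Icc.1 (hf x hx)).1
  refine (preceq_iff_mu_le hfG hG).2 ⟨(card_image_of_injOn hinj).ge, fun l => ?_⟩
  refine card_le_card_of_injOn f (fun x hx => ?_) (hinj.mono (by simp))
  obtain ⟨hxG, hxl⟩ := mem_inter.1 (mem_coe.1 hx)
  obtain ⟨hfx1, hfxx⟩ := mem_Icc.1 (hf x hxG)
  exact mem_coe.2 (mem_inter.2
    ⟨mem_image_of_mem f hxG, mem_Icc.2 ⟨hfx1, hfxx.trans (mem_Icc.1 hxl).2⟩⟩)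

end Preceq

lemma exists_disjoint_supersets_card_eq {α : Type*} [DecidableEq α] {U P Q : Finset α} {k : ℕ}
    (hP : P ⊆ U) (hQ : Q ⊆ U) (hPQ : Disjoint P Q) (hPk : #P ≤ k) (hQk : #Q ≤ k)
    (hU : 2 * k ≤ #U) :
    ∃ S T, P ⊆ S ∧ Q ⊆ T ∧ S ⊆ U ∧ T ⊆ U ∧ #S = k ∧ #T = k ∧ Disjoint S T := by
  obtain ⟨S, hPS, hSU, hSk⟩ := exists_subsuperset_card_eq (Finset.subset_sdiff.2 ⟨hP, hPQ⟩) hPk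
    (by have := le_card_sdiff Q U; omega)
  obtain ⟨T, hQT, hTU, hTk⟩ := exists_subsuperset_card_eq
    (Finset.subset_sdiff.2 ⟨hQ, (Finset.subset_sdiff.1 hSU).2.symm⟩) hQk
    (by have := le_card_sdiff S U; omega)
  exact ⟨S, T, hPS, hQT, hSU.trans sdiff_subset, hTU.trans sdiff_subset, hSk, hTk,
    (Finset.subset_sdiff.1 hTU).2.symm⟩

/-- `mergeRankLeft G H x` and `mergeRankRight G H y` are the positions of `x ∈ G` and `y ∈ H`
when `G` and `H` are listed together in increasing order, an element of `G` coming before an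
equal element of `H`. -/
def mergeRankLeft (G H : Finset ℕ) (x : ℕ) : ℕ := mu G x + mu H (x - 1)

def mergeRankRight (G H : Finset ℕ) (y : ℕ) : ℕ := mu G y + mu H y

section MergeRank

variable {G H : Finset ℕ} {x y : ℕ}

lemma mergeRankLeft_strictMonoOn (hG : ∀ x ∈ G, 0 < x) :
    StrictMonoOn (mergeRankLeft G H) G := fun _ _ x' hx' h =>
  add_lt_add_of_lt_of_le (mu_lt_mu_of_mem hx' (hG x' hx') h)
    (mu_mono (Nat.sub_le_sub_right h.le 1))

lemma mergeRankRight_strictMonoOn (hH : ∀ y ∈ H, 0 < y) :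
    StrictMonoOn (mergeRankRight G H) H := fun _ _ y' hy' h =>
  add_lt_add_of_le_of_lt (mu_mono h.le) (mu_lt_mu_of_mem hy' (hH y' hy') h)

lemma mergeRankLeft_ne_mergeRankRight (hG : ∀ x ∈ G, 0 < x) (hH : ∀ y ∈ H, 0 < y)
    (hx : x ∈ G) (hy : y ∈ H) : mergeRankLeft G H x ≠ mergeRankRight G H y := by
  rcases le_or_gt x y with hxy | hyx
  · have := hH y hy
    exact (add_lt_add_of_le_of_lt (mu_mono hxy) (mu_lt_mu_of_mem hy this (by omega))).ne
  · exact (add_lt_add_of_lt_of_le (mu_lt_mu_of_mem hx (hG x hx) hyx)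
      (mu_mono (by omega : y ≤ x - 1))).ne'

lemma disjoint_image_mergeRank (hG : ∀ x ∈ G, 0 < x) (hH : ∀ y ∈ H, 0 < y) :
    Disjoint (G.image (mergeRankLeft G H)) (H.image (mergeRankRight G H)) := by
  simp only [disjoint_left, mem_image, not_exists, not_and, forall_exists_index, and_imp,
    forall_apply_eq_imp_iff₂]
  exact fun x hx y hy h => mergeRankLeft_ne_mergeRankRight hG hH hx hy h.symm

lemma mergeRankLeft_mem_Icc (hx : x ∈ G) (hx0 : 0 < x) (h : mu G x + mu H x ≤ x) :
    mergeRankLeft G H x ∈ Icc 1 x := by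
  have := mu_pos_of_mem hx hx0
  have := mu_mono (Nat.sub_le x 1) (A := H)
  rw [mem_Icc, mergeRankLeft]
  omega

lemma mergeRankRight_mem_Icc (hy : y ∈ H) (hy0 : 0 < y) (h : mu G y + mu H y ≤ y) :
    mergeRankRight G H y ∈ Icc 1 y := by
  have := mu_pos_of_mem hy hy0
  rw [mem_Icc, mergeRankRight]
  omega

end MergeRank

lemma Fam_mono {n k : ℕ} {𝒢 ℋ : Set (Finset ℕ)} (h : 𝒢 ⊆ ℋ) : Fam n k 𝒢 ⊆ Fam n k ℋ :=
  fun _ ⟨hS, hk, G, hG, hSG⟩ => ⟨hS, hk, G, h hG, hSG⟩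

lemma IsIntersecting.anti {𝒜 ℬ : Set (Finset ℕ)} (hℬ : IsIntersecting ℬ) (h : 𝒜 ⊆ ℬ) :
    IsIntersecting 𝒜 :=
  fun A hA B hB => hℬ A (h hA) B (h hB)

lemma isIntersecting_Fam_of_lt_mu_add_mu {n k : ℕ} {𝒢 : Set (Finset ℕ)}
    (h𝒢 : ∀ G ∈ 𝒢, ∀ x ∈ G, 0 < x)
    (hmu : ∀ G ∈ 𝒢, ∀ H ∈ 𝒢, ∃ l, l < mu G l + mu H l) : IsIntersecting (Fam n k 𝒢) := by
  rintro A ⟨hA, -, G, hG, hAG⟩ B ⟨hB, -, H, hH, hBH⟩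
  obtain ⟨l, hl⟩ := hmu G hG H hH
  have hGA := ((preceq_iff_mu_le (pos_of_subset_Icc hA) (h𝒢 G hG)).1 hAG).2 l
  have hHB := ((preceq_iff_mu_le (pos_of_subset_Icc hB) (h𝒢 H hH)).1 hBH).2 l
  exact inter_nonempty_of_lt_mu_add_mu (hl.trans_le (add_le_add hGA hHB))

lemma not_isIntersecting_Fam_pair {n k : ℕ} {G H : Finset ℕ} (hG : G ⊆ Icc 1 n)
    (hH : H ⊆ Icc 1 n) (hGk : #G ≤ k) (hHk : #H ≤ k) (hn : 2 * k ≤ n)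
    (hmu : ∀ l ∈ Icc 1 n, mu G l + mu H l ≤ l) : ¬IsIntersecting (Fam n k {G, H}) := by
  have hG0 := pos_of_subset_Icc hG
  have hH0 := pos_of_subset_Icc hH
  have hleft x (hx : x ∈ G) := mergeRankLeft_mem_Icc (H := H) hx (hG0 x hx) (hmu x (hG hx))
  have hright y (hy : y ∈ H) := mergeRankRight_mem_Icc hy (hH0 y hy) (hmu y (hH hy))
  have hPG := preceq_image_of_injOn hG0 (mergeRankLeft_strictMonoOn hG0).injOn hleft
  have hQH := preceq_image_of_injOn hH0 (mergeRankRight_strictMonoOn hH0).injOn hright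
  obtain ⟨S, T, hPS, hQT, hS, hT, hSk, hTk, hST⟩ := exists_disjoint_supersets_card_eq
    (image_subset_iff.2 fun x hx => Icc_subset_Icc_right (mem_Icc.1 (hG hx)).2 (hleft x hx))
    (image_subset_iff.2 fun y hy => Icc_subset_Icc_right (mem_Icc.1 (hH hy)).2 (hright y hy))
    (disjoint_image_mergeRank hG0 hH0) (card_image_le.trans hGk) (card_image_le.trans hHk)
    (by rwa [Nat.card_Icc, Nat.add_sub_cancel])
  intro hint
  refine not_disjoint_iff_nonempty_inter.2 (hint S ⟨hS, hSk, G, by simp, ?_⟩ T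
    ⟨hT, hTk, H, by simp, ?_⟩) hST
  · exact preceq_of_subset (pos_of_subset_Icc hS) hG0 hPS hPG
  · exact preceq_of_subset (pos_of_subset_Icc hT) hH0 hQT hQH

theorem stmt7_general (n k : ℕ) (hn : 2 * k ≤ n) (𝒢 : Set (Finset ℕ))
    (h𝒢 : ∀ G ∈ 𝒢, G ⊆ Finset.Icc 1 n ∧ G.card ≤ k) :
    IsIntersecting (Fam n k 𝒢) ↔
      ∀ G ∈ 𝒢, ∀ H ∈ 𝒢, ∃ l ∈ Finset.Icc 1 n, l < mu G l + mu H l := by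
  refine ⟨fun hint G hG H hH => ?_, fun hmu => ?_⟩
  · by_contra! hle
    exact not_isIntersecting_Fam_pair (h𝒢 G hG).1 (h𝒢 H hH).1 (h𝒢 G hG).2 (h𝒢 H hH).2 hn hle
      (hint.anti (Fam_mono (Set.pair_subset hG hH)))
  · exact isIntersecting_Fam_of_lt_mu_add_mu (fun G hG => pos_of_subset_Icc (h𝒢 G hG).1)
      fun G hG H hH => (hmu G hG H hH).imp fun _ => And.right

theorem stmt7 (n k : ℕ) (h4 : 4 ≤ 2 * k) (hn : 2 * k ≤ n) (𝒢 : Set (Finset ℕ))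
    (h𝒢 : ∀ G ∈ 𝒢, G ⊆ Finset.Icc 1 n ∧ G.card ≤ k) :
    IsIntersecting (Fam n k 𝒢) ↔
      ∀ G ∈ 𝒢, ∀ H ∈ 𝒢, ∃ l ∈ Finset.Icc 1 n, l < mu G l + mu H l :=
  stmt7_general n k hn 𝒢 h𝒢
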